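/- Let n ≥ 1 be an integer, t_1, …, t_{n−1} real constants, t_n := 1, and α ∈ ℝ. Let w : ℝ → ℝ be smooth, set u := w' − w² and f_n := Σ_{l=1}^n t_l·L_l[u], and suppose w solves P_II^(n), i.e. f_n'(z) + 2·w(z)·f_n(z) = z·w(z) + α for all z ∈ ℝ, and that z − 2·f_n(z) ≠ 0 for all z ∈ ℝ. Define w̃ : ℝ → ℝ by w̃(z) := w(z) − (2α − 1)/(2·f_n(z) − z). Then for all z ∈ ℝ: w̃'(z) − w̃(z)² = w'(z) − w(z)². -/

import Mathlib

/-- The Lenard sequence of a function `u : ℝ → ℝ`: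
`L₀[u] = 1/2`, `L₁[u] = u`, and for `k ≥ 1`,
`L_{k+1}[u] = (L_k[u])'' + 3·L_k[u]·L₁[u]
  + ∑_{j=1}^{k-1} ( L_{k-j}[u]·(4·L₁[u]·L_j[u] - L_{j+1}[u] + 2·(L_j[u])'') - (L_j[u])'·(L_{k-j}[u])' )`. -/
noncomputable def lenard (u : ℝ → ℝ) : ℕ → ℝ → ℝ
  | 0 => fun _ => 1 / 2
  | 1 => u
  | k + 2 => fun z =>
      deriv (deriv (lenard u (k + 1))) z
        + 3 * lenard u (k + 1) z * lenard u 1 z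
        + ∑ j ∈ (Finset.range k).attach,
            (lenard u (k - j.1) z *
                (4 * lenard u 1 z * lenard u (j.1 + 1) z - lenard u (j.1 + 2) z
                  + 2 * deriv (deriv (lenard u (j.1 + 1))) z)
              - deriv (lenard u (j.1 + 1)) z * deriv (lenard u (k - j.1)) z)
  termination_by k => k
  decreasing_by
    all_goals first
      | omega
      | (have h := j.2; simp only [Finset.mem_range] at h; omega)

open scoped ContDiff in
lemma lenard_contDiff (u : ℝ → ℝ) (hu : ContDiff ℝ ∞ u) :
    ∀ k, ContDiff ℝ ∞ (lenard u k) := by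
  intro k
  induction k using Nat.strong_induction_on with
  | _ k ih =>
    match k with
    | 0 => simpa [lenard] using (contDiff_const : ContDiff ℝ ∞ (fun _ : ℝ => (1:ℝ)/2))
    | 1 => simpa [lenard] using hu
    | k + 2 =>
      have hd : ∀ m, m < k + 2 → ContDiff ℝ ∞ (deriv (lenard u m)) := fun m hm =>
        (contDiff_infty_iff_deriv.mp (ih m hm)).2
      have hdd : ∀ m, m < k + 2 → ContDiff ℝ ∞ (deriv (deriv (lenard u m))) := fun m hm =>
        (contDiff_infty_iff_deriv.mp (hd m hm)).2
      rw [lenard]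
      refine ContDiff.add (ContDiff.add (hdd (k+1) (by omega)) ?_) ?_
      · exact (contDiff_const.mul (ih (k+1) (by omega))).mul (ih 1 (by omega))
      · refine ContDiff.sum fun j _ => ContDiff.sub ?_ ?_
        · have hj := j.2
          simp only [Finset.mem_range] at hj
          exact (ih (k - j.1) (by omega)).mul
            (((((contDiff_const.mul (ih 1 (by omega))).mul (ih (j.1+1) (by omega))).sub
              (ih (j.1+2) (by omega))).add
              (contDiff_const.mul (hdd (j.1+1) (by omega)))))
        · have hj := j.2
          simp only [Finset.mem_range] at hj
          exact (hd (j.1+1) (by omega)).mul (hd (k - j.1) (by omega))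

/-- **Bäcklund transformation `s` of the second Painlevé hierarchy preserves `w' - w²`**
(hence the sigma function): if `w` smoothly solves `P_II^(n)` with `z - 2 f_n(z) ≠ 0`
everywhere, then `w̃ = w - (2α - 1)/(2 f_n - z)` satisfies `w̃' - w̃² = w' - w²`. -/
theorem backlund_s_invariance
    (n : ℕ) (hn : 1 ≤ n) (t : ℕ → ℝ) (htn : t n = 1) (α : ℝ)
    (w : ℝ → ℝ) (hw : ContDiff ℝ (⊤ : ℕ∞) w)
    (u f : ℝ → ℝ)
    (hu : ∀ z : ℝ, u z = deriv w z - (w z) ^ 2)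
    (hf : ∀ z : ℝ, f z = ∑ l ∈ Finset.Icc 1 n, t l * lenard u l z)
    (hP : ∀ z : ℝ, deriv f z + 2 * w z * f z = z * w z + α)
    (hne : ∀ z : ℝ, z - 2 * f z ≠ 0)
    (wt : ℝ → ℝ)
    (hwt : ∀ z : ℝ, wt z = w z - (2 * α - 1) / (2 * f z - z)) :
    ∀ z : ℝ, deriv wt z - (wt z) ^ 2 = deriv w z - (w z) ^ 2 := by
  open scoped ContDiff in
  have hw' : ContDiff ℝ ∞ w := hw.of_le (by simp)
  have hone : (1 : WithTop ℕ∞) ≤ ((⊤ : ℕ∞) : WithTop ℕ∞) := by exact_mod_cast le_top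
  have hu' : u = fun z => deriv w z - (w z) ^ 2 := funext hu
  have hus : ContDiff ℝ ∞ u := by
    rw [hu']
    exact ((contDiff_infty_iff_deriv.mp hw').2).sub (hw'.pow 2)
  have hf' : f = fun z => ∑ l ∈ Finset.Icc 1 n, t l * lenard u l z := funext hf
  have hfs : ContDiff ℝ ∞ f := by
    rw [hf']
    exact ContDiff.sum fun l _ => contDiff_const.mul (lenard_contDiff u hus l)
  have hfd : Differentiable ℝ f := hfs.differentiable (by simp)
  have hwd : Differentiable ℝ w := hw'.differentiable (by simp)
  have hwt' : wt = fun z => w z - (2 * α - 1) / (2 * f z - z) := funext hwt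
  intro z
  have hdz : 2 * f z - z ≠ 0 := fun h => hne z (by linarith)
  have hden : HasDerivAt (fun y => 2 * f y - y) (2 * deriv f z - 1) z :=
    (((hfd z).hasDerivAt.const_mul 2).sub (hasDerivAt_id z))
  have hq : HasDerivAt (fun y => (2 * α - 1) / (2 * f y - y))
      ((0 * (2 * f z - z) - (2 * α - 1) * (2 * deriv f z - 1)) / (2 * f z - z) ^ 2) z :=
    (hasDerivAt_const z (2 * α - 1)).div hden hdz
  have hwtd : HasDerivAt wt
      (deriv w z - (0 * (2 * f z - z) - (2 * α - 1) * (2 * deriv f z - 1)) / (2 * f z - z) ^ 2)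
      z := by
    rw [hwt']
    exact (hwd z).hasDerivAt.sub hq
  rw [hwtd.deriv, hwt z]
  have hPz := hP z
  have hdf : deriv f z = z * w z + α - 2 * w z * f z := by linarith
  rw [hdf]
  field_simp
  ring
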